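/- Let S be a pseudo-nilpotent finite semigroup with principal series S = S_1 ⊃ ... ⊃ S_{m+1} = ∅. If S_i \ S_{i+1} is not an isolated subset and not a root, then there exists a root S_j \ S_{j+1} with i < j and S_i \ S_{i+1} ⊆ S^{(j)}. Moreover S \ K = ⋃ S^{(i)}, where the union runs over all i with S_i \ S_{i+1} a root and K is the union of all isolated subsets. -/

import Mathlib

/-!
An edge of `N_S` from a layer `S_j \ S_{j+1}` into `S_{j+1}` generates a subsemigroup that is not
Mal'cev nilpotent; by finiteness it contains a Mal'cev sequence returning to a pair `(x, y)`
with `x ≠ y`. Such a cycle cannot live in `⟨g⟩ ∪ I` with `I` an ideal missing `x`, since `⟨g⟩`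
is commutative. Hence `x` lies in some deeper layer `S_q \ S_{q+1}`, pseudo-nilpotency makes
the factor `S_q / S_{q+1}` non-nilpotent, and the edge's endpoint in `S_j` does not annihilate
that factor, so the whole layer `S_j \ S_{j+1}` lies in `F_{S_q/S_{q+1}}(S/S_{q+1})` (by
maximality of the principal series). Iterating downwards, a non-isolated non-root layer
reaches a root, and the description of `S \ K` follows.
-/

/-- One multiplication step `a · w · b` where `w` ranges over `S¹`
(`none` playing the role of the adjoined identity). -/
def mulW {S : Type*} [Semigroup S] (a : S) (w : Option S) (b : S) : S :=
  match w with
  | none => a * b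
  | some c => a * c * b

/-- The Mal'cev sequences: `(malcev x y w n).1 = λ_n` and `(malcev x y w n).2 = ρ_n`,
with `λ_0 = x`, `ρ_0 = y`, `λ_{n+1} = λ_n w_{n+1} ρ_n`, `ρ_{n+1} = ρ_n w_{n+1} λ_n`. -/
def malcev {S : Type*} [Semigroup S] (x y : S) (w : ℕ → Option S) : ℕ → S × S
  | 0 => (x, y)
  | n + 1 =>
      let p := malcev x y w n
      (mulW p.1 (w n) p.2, mulW p.2 (w n) p.1)

/-- Mal'cev nilpotency of a (multiplicatively closed) subset `A` of `S`,
computed with parameters from `A¹`. -/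
def SetMN {S : Type*} [Semigroup S] (A : Set S) : Prop :=
  ∃ n : ℕ, 0 < n ∧ ∀ x ∈ A, ∀ y ∈ A, ∀ w : ℕ → Option S,
    (∀ k c, w k = some c → c ∈ A) →
    (malcev x y w n).1 = (malcev x y w n).2

/-- A semigroup is Mal'cev nilpotent. -/
def IsMN (S : Type*) [Semigroup S] : Prop := SetMN (Set.univ : Set S)

/-- Equality in the Rees quotient by (the possibly empty ideal) `I`. -/
def ReesEq {S : Type*} [Semigroup S] (I : Set S) (a b : S) : Prop :=
  a = b ∨ (a ∈ I ∧ b ∈ I)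

/-- Mal'cev nilpotency of the Rees quotient `A / I` (computed by lifting to `A`). -/
def SetMNMod {S : Type*} [Semigroup S] (I A : Set S) : Prop :=
  ∃ n : ℕ, 0 < n ∧ ∀ x ∈ A, ∀ y ∈ A, ∀ w : ℕ → Option S,
    (∀ k c, w k = some c → c ∈ A) →
    ReesEq I (malcev x y w n).1 (malcev x y w n).2

/-- `I` is an ideal of (the mul-closed subset) `T`; the empty set counts as an ideal. -/
def IsIdealIn {S : Type*} [Semigroup S] (T I : Set S) : Prop :=
  I ⊆ T ∧ ∀ a ∈ I, ∀ t ∈ T, t * a ∈ I ∧ a * t ∈ I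

/-- Edge of the upper non-nilpotent graph `N_S`: `⟨a,b⟩` is not Mal'cev nilpotent. -/
def NEdge {S : Type*} [Semigroup S] (a b : S) : Prop :=
  a ≠ b ∧ ¬ SetMN (Subsemigroup.closure ({a, b} : Set S) : Set S)

/-- The generating set of the subsemigroup `⟨x, y, w_1, …, w_m⟩`. -/
def genSet {S : Type*} [Semigroup S] (x y : S) (w : ℕ → Option S) (m : ℕ) : Set S :=
  {x, y} ∪ {c | ∃ k, k < m ∧ w k = some c}

/-- A pseudo-nilpotent semigroup. -/
def IsPN (S : Type*) [Semigroup S] : Prop :=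
  ∀ (x y : S) (w : ℕ → Option S) (m : ℕ) (I : Set S),
    IsIdealIn (Subsemigroup.closure (genSet x y w m) : Set S) I →
    (malcev x y w m).1 ∉ I → (malcev x y w m).2 ∉ I →
    (∃ t, t < m ∧ (malcev x y w t).1 ≠ (malcev x y w t).2 ∧
      malcev x y w t = malcev x y w m) →
    ∀ i ≤ m, ¬ SetMNMod I
      (Subsemigroup.closure ({(malcev x y w i).1, (malcev x y w i).2} : Set S) : Set S)

/-- A principal series `S = S_1 ⊃ S_2 ⊃ ⋯ ⊃ S_m ⊃ S_{m+1} = ∅` of a semigroup: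
a strictly decreasing chain of ideals with no ideal strictly between consecutive
terms (the empty set counts as an ideal). -/
structure PrincipalSeries (S : Type*) [Semigroup S] where
  m : ℕ
  C : ℕ → Set S
  first : C 1 = Set.univ
  last : C (m + 1) = ∅
  ideal : ∀ i, 1 ≤ i → i ≤ m → IsIdealIn Set.univ (C i)
  ssub : ∀ i, 1 ≤ i → i ≤ m → C (i + 1) ⊂ C i
  maximal : ∀ i, 1 ≤ i → i ≤ m → ∀ I : Set S, IsIdealIn Set.univ I →
    C (i + 1) ⊆ I → I ⊆ C i → I = C (i + 1) ∨ I = C i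

variable {S : Type*} [Semigroup S]

/-- `F_{S_j/S_{j+1}}(S/S_{j+1})`, computed in `S`:  the elements `s ∉ S_j` with
`s·a ≠ θ` or `a·s ≠ θ` in `S/S_{j+1}` for some `a` in the ideal `S_j/S_{j+1}`. -/
def FsetQ (ps : PrincipalSeries S) (j : ℕ) : Set S :=
  {s | s ∉ ps.C j ∧ ∃ a ∈ ps.C j, s * a ∉ ps.C (j + 1) ∨ a * s ∉ ps.C (j + 1)}

/-- `S_i \ S_{i+1}` is a root: the principal factor `S_i/S_{i+1}` is not Mal'cev
nilpotent and there is no `N_S`-edge between `S_i \ S_{i+1}` and `S_{i+1}`. -/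
def Root (ps : PrincipalSeries S) (i : ℕ) : Prop :=
  ¬ SetMNMod (ps.C (i + 1)) (ps.C i) ∧
  ∀ a ∈ ps.C i \ ps.C (i + 1), ∀ b ∈ ps.C (i + 1), ¬ NEdge a b

/-- `S_i \ S_{i+1}` is an isolated subset: it is not a root, and whenever
`S_i \ S_{i+1} ⊆ F_{S_j/S_{j+1}}(S/S_{j+1})` the factor `S_j/S_{j+1}` is nilpotent. -/
def Isolated (ps : PrincipalSeries S) (i : ℕ) : Prop :=
  ¬ Root ps i ∧
  ∀ j, 1 ≤ j → j ≤ ps.m → ps.C i \ ps.C (i + 1) ⊆ FsetQ ps j →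
    SetMNMod (ps.C (j + 1)) (ps.C j)

/-- `K`, the union of all isolated subsets `S_i \ S_{i+1}`. -/
def Kset (ps : PrincipalSeries S) : Set S :=
  {a | ∃ i, 1 ≤ i ∧ i ≤ ps.m ∧ Isolated ps i ∧ a ∈ ps.C i \ ps.C (i + 1)}

/-- The stem `S^{(i)} = F_{S_i/S_{i+1}}(S/S_{i+1}) ∪ (S_i \ S_{i+1})` of a root. -/
def Stem (ps : PrincipalSeries S) (i : ℕ) : Set S :=
  FsetQ ps i ∪ (ps.C i \ ps.C (i + 1))

def IsTwoSidedIdeal (I : Set S) : Prop := ∀ a ∈ I, ∀ t : S, t * a ∈ I ∧ a * t ∈ I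

lemma isIdealIn_univ_iff {I : Set S} : IsIdealIn Set.univ I ↔ IsTwoSidedIdeal I := by
  simp [IsIdealIn, IsTwoSidedIdeal]

namespace IsTwoSidedIdeal

variable {I J : Set S}

lemma union (hI : IsTwoSidedIdeal I) (hJ : IsTwoSidedIdeal J) : IsTwoSidedIdeal (I ∪ J) := by
  rintro a (ha | ha) t
  · exact ⟨Or.inl (hI a ha t).1, Or.inl (hI a ha t).2⟩
  · exact ⟨Or.inr (hJ a ha t).1, Or.inr (hJ a ha t).2⟩

lemma inter (hI : IsTwoSidedIdeal I) (hJ : IsTwoSidedIdeal J) : IsTwoSidedIdeal (I ∩ J) :=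
  fun a ha t => ⟨⟨(hI a ha.1 t).1, (hJ a ha.2 t).1⟩, ⟨(hI a ha.1 t).2, (hJ a ha.2 t).2⟩⟩

lemma isIdealIn_inter (hI : IsTwoSidedIdeal I) (T : Subsemigroup S) :
    IsIdealIn (T : Set S) (I ∩ T) :=
  ⟨Set.inter_subset_right, fun a ha t ht =>
    ⟨⟨(hI a ha.1 t).1, T.mul_mem ht ha.2⟩, ⟨(hI a ha.1 t).2, T.mul_mem ha.2 ht⟩⟩⟩

lemma closure_subset (hI : IsTwoSidedIdeal I) {s : Set S} (hs : s ⊆ I) :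
    (Subsemigroup.closure s : Set S) ⊆ I :=
  Subsemigroup.closure_le (S := ⟨I, fun {a b} _ hb => (hI b hb a).1⟩) |>.mpr hs

lemma closure_pair_subset (hI : IsTwoSidedIdeal I) (a : S) {b : S} (hb : b ∈ I) :
    (Subsemigroup.closure {a, b} : Set S) ⊆ Subsemigroup.closure {a} ∪ I := by
  let T : Subsemigroup S :=
    { carrier := Subsemigroup.closure {a} ∪ I
      mul_mem' := by
        rintro u v (hu | hu) (hv | hv)
        exacts [Or.inl (mul_mem hu hv), Or.inr (hI v hv u).1, Or.inr (hI u hu v).2,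
          Or.inr (hI u hu v).2] }
  refine Subsemigroup.closure_le (S := T) |>.mpr ?_
  rintro z (rfl | rfl)
  exacts [Or.inl (Subsemigroup.subset_closure rfl), Or.inr hb]

lemma mulW_mem (hI : IsTwoSidedIdeal I) {u v : S} (w : Option S) (h : u ∈ I ∨ v ∈ I) :
    mulW u w v ∈ I := by
  cases w with
  | none => exact h.elim (fun hu => (hI u hu v).2) (fun hv => (hI v hv u).1)
  | some c =>
    exact h.elim (fun hu => (hI _ (hI u hu c).2 v).2) (fun hv => (hI v hv _).1)

end IsTwoSidedIdeal

lemma malcev_succ (x y : S) (w : ℕ → Option S) (n : ℕ) :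
    malcev x y w (n + 1) =
      (mulW (malcev x y w n).1 (w n) (malcev x y w n).2,
       mulW (malcev x y w n).2 (w n) (malcev x y w n).1) := rfl

lemma malcev_shift (x y : S) (w : ℕ → Option S) (t k : ℕ) :
    malcev (malcev x y w t).1 (malcev x y w t).2 (fun n => w (t + n)) k =
      malcev x y w (t + k) := by
  induction k with
  | zero => rfl
  | succ k ih => rw [malcev_succ, ih, ← Nat.add_assoc, malcev_succ]

lemma malcev_mem {A : Subsemigroup S} {x y : S} {w : ℕ → Option S} (hx : x ∈ A) (hy : y ∈ A)
    (hw : ∀ k c, w k = some c → c ∈ A) (n : ℕ) :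
    (malcev x y w n).1 ∈ A ∧ (malcev x y w n).2 ∈ A := by
  have hmulW {u v : S} (k : ℕ) (hu : u ∈ A) (hv : v ∈ A) : mulW u (w k) v ∈ A := by
    cases hk : w k with
    | none => exact mul_mem hu hv
    | some c => exact mul_mem (mul_mem hu (hw k c hk)) hv
  induction n with
  | zero => exact ⟨hx, hy⟩
  | succ n ih => exact ⟨hmulW n ih.1 ih.2, hmulW n ih.2 ih.1⟩

lemma malcev_fst_eq_snd_of_le {x y : S} {w : ℕ → Option S} {n k : ℕ}
    (h : (malcev x y w n).1 = (malcev x y w n).2) (hnk : n ≤ k) :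
    (malcev x y w k).1 = (malcev x y w k).2 := by
  induction k, hnk using Nat.le_induction with
  | base => exact h
  | succ k _ ih => rw [malcev_succ, ih]

lemma malcev_mem_of_lt {I : Set S} (hI : IsTwoSidedIdeal I) {x y : S} {w : ℕ → Option S}
    {n k : ℕ} (h : (malcev x y w n).1 ∈ I ∨ (malcev x y w n).2 ∈ I) (hnk : n < k) :
    (malcev x y w k).1 ∈ I ∧ (malcev x y w k).2 ∈ I := by
  induction k, hnk using Nat.le_induction with
  | base => exact ⟨hI.mulW_mem _ h, hI.mulW_mem _ h.symm⟩
  | succ k _ ih => exact ⟨hI.mulW_mem _ (Or.inl ih.1), hI.mulW_mem _ (Or.inl ih.2)⟩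

structure IsMalcevCycle (x y : S) (w : ℕ → Option S) (p : ℕ) : Prop where
  pos : 0 < p
  malcev_eq : malcev x y w p = (x, y)
  ne : x ≠ y

lemma exists_isMalcevCycle [Finite S] {A : Subsemigroup S} (h : ¬ SetMN (A : Set S)) :
    ∃ x ∈ A, ∃ y ∈ A, ∃ w : ℕ → Option S,
      (∀ k c, w k = some c → c ∈ A) ∧ ∃ p, IsMalcevCycle x y w p := by
  have := Fintype.ofFinite S
  set N := Fintype.card (S × S)
  obtain ⟨x, hx, y, hy, w, hw, hne⟩ : ∃ x ∈ A, ∃ y ∈ A, ∃ w : ℕ → Option S,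
      (∀ k c, w k = some c → c ∈ A) ∧ (malcev x y w (N + 1)).1 ≠ (malcev x y w (N + 1)).2 := by
    by_contra! hall
    exact h ⟨N + 1, N.succ_pos, hall⟩
  obtain ⟨t, t', htt', heq⟩ := Fintype.exists_ne_map_eq_of_card_lt
    (fun k : Fin (N + 1) => malcev x y w k) (by simp [N])
  obtain ⟨s, s', hss', hs', heq⟩ : ∃ s s' : ℕ, s < s' ∧ s' ≤ N ∧
      malcev x y w s = malcev x y w s' := by
    rcases lt_or_gt_of_ne htt' with h | h
    · exact ⟨t, t', h, Nat.lt_succ_iff.mp t'.2, heq⟩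
    · exact ⟨t', t, h, Nat.lt_succ_iff.mp t.2, heq.symm⟩
  have hmem := malcev_mem hx hy hw s
  refine ⟨_, hmem.1, _, hmem.2, fun n => w (s + n), fun k c hc => hw _ c hc, s' - s,
    Nat.sub_pos_of_lt hss', ?_, fun h => hne (malcev_fst_eq_snd_of_le h (by omega))⟩
  rw [malcev_shift, Nat.add_sub_cancel' hss'.le, ← heq]

namespace IsMalcevCycle

variable {x y : S} {w : ℕ → Option S} {p : ℕ}

lemma mem_of_malcev_mem (hc : IsMalcevCycle x y w p) {I : Set S} (hI : IsTwoSidedIdeal I)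
    {k : ℕ} (hk : k ≤ p) (h : (malcev x y w k).1 ∈ I ∨ (malcev x y w k).2 ∈ I) :
    x ∈ I ∧ y ∈ I := by
  rcases hk.lt_or_eq with hk | rfl
  · simpa [hc.malcev_eq] using malcev_mem_of_lt hI h hk
  · rw [hc.malcev_eq] at h
    simpa [hc.malcev_eq] using malcev_mem_of_lt hI (w := w) (n := 0) (k := k) h hc.pos

lemma mem_iff (hc : IsMalcevCycle x y w p) {I : Set S} (hI : IsTwoSidedIdeal I) :
    x ∈ I ↔ y ∈ I :=
  ⟨fun h => (hc.mem_of_malcev_mem hI hc.pos.le (Or.inl h)).2,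
    fun h => (hc.mem_of_malcev_mem hI hc.pos.le (Or.inr h)).1⟩

/-- Since `⟨g⟩` is commutative, a cycle inside `⟨g⟩` would have `λ_1 = ρ_1`, hence `x = y`. -/
lemma mem_of_subset_closure_singleton_union (hc : IsMalcevCycle x y w p) {I : Set S}
    (hI : IsTwoSidedIdeal I) {A : Set S} {g : S} (hA : A ⊆ Subsemigroup.closure {g} ∪ I)
    (hx : x ∈ A) (hy : y ∈ A) (hw : ∀ k c, w k = some c → c ∈ A) : x ∈ I := by
  by_contra hxI
  have hcomm {u v : S} (hu : u ∈ A) (hv : v ∈ A) (huI : u ∉ I) (hvI : v ∉ I) : u * v = v * u :=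
    isMulCommutative_iff_of_setLike.mp
      (Subsemigroup.isMulCommutative_closure S (s := {g}) (by rintro a rfl b rfl; rfl)) u
      ((hA hu).resolve_right huI) v ((hA hv).resolve_right hvI)
  have hyI : y ∉ I := by rwa [← hc.mem_iff hI]
  have hstep : (malcev x y w 1).1 = (malcev x y w 1).2 := by
    change mulW x (w 0) y = mulW y (w 0) x
    cases hw0 : w 0 with
    | none => exact hcomm hx hy hxI hyI
    | some c =>
      have hcI : c ∉ I := fun hcI => hxI (hc.mem_of_malcev_mem hI (k := 1) hc.pos
        (Or.inl (by rw [malcev_succ, hw0]; exact (hI _ (hI c hcI x).1 y).2))).1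
      change x * c * y = y * c * x
      have hcA := hw 0 c hw0
      rw [hcomm hx hcA hxI hcI, mul_assoc, hcomm hx hy hxI hyI, ← mul_assoc,
        hcomm hcA hy hcI hyI]
  exact hc.ne (by simpa [hc.malcev_eq] using malcev_fst_eq_snd_of_le hstep hc.pos)

end IsMalcevCycle

lemma SetMNMod.inter_of_le {J A : Set S} (h : SetMNMod J A) {B T : Subsemigroup S}
    (hBA : (B : Set S) ⊆ A) (hBT : B ≤ T) : SetMNMod (J ∩ T) B := by
  obtain ⟨n, hn, hJ⟩ := h
  refine ⟨n, hn, fun x hx y hy w hw => ?_⟩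
  have hmem := malcev_mem hx hy hw n
  exact (hJ x (hBA hx) y (hBA hy) w fun k c hc => hBA (hw k c hc)).imp_right
    fun h => ⟨⟨h.1, hBT hmem.1⟩, ⟨h.2, hBT hmem.2⟩⟩

lemma IsPN.not_setMNMod_of_isMalcevCycle (hPN : IsPN S) {x y : S} {w : ℕ → Option S} {p : ℕ}
    (hc : IsMalcevCycle x y w p) {J : Set S} (hJ : IsTwoSidedIdeal J) (hxJ : x ∉ J)
    {A : Set S} (hA : (Subsemigroup.closure {x, y} : Set S) ⊆ A) : ¬ SetMNMod J A := by
  intro hJA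
  have hyJ : y ∉ J := by rwa [← hc.mem_iff hJ]
  refine hPN x y w p _ (hJ.isIdealIn_inter (Subsemigroup.closure (genSet x y w p)))
    (by rw [hc.malcev_eq]; exact fun h => hxJ h.1) (by rw [hc.malcev_eq]; exact fun h => hyJ h.1)
    ⟨0, hc.pos, hc.ne, hc.malcev_eq.symm⟩ 0 p.zero_le ?_
  exact hJA.inter_of_le hA (Subsemigroup.closure_mono Set.subset_union_left)

def annihilator (I J : Set S) : Set S := {r | ∀ e ∈ J, r * e ∈ I ∧ e * r ∈ I}

lemma IsTwoSidedIdeal.annihilator {I J : Set S} (hI : IsTwoSidedIdeal I)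
    (hJ : IsTwoSidedIdeal J) : IsTwoSidedIdeal (annihilator I J) := by
  intro r hr t
  refine ⟨fun e he => ⟨?_, ?_⟩, fun e he => ⟨?_, ?_⟩⟩
  · rw [mul_assoc]; exact (hI _ (hr e he).1 t).1
  · rw [← mul_assoc]; exact (hr _ (hJ e he t).2).2
  · rw [mul_assoc]; exact (hr _ (hJ e he t).1).1
  · rw [← mul_assoc]; exact (hI _ (hr e he).2 t).2

lemma mulW_mem_of_mem_annihilator {I J : Set S} (hJ : IsTwoSidedIdeal J) {r e : S}
    (hr : r ∈ annihilator I J) (he : e ∈ J) (w : Option S) : mulW r w e ∈ I := by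
  cases w with
  | none => exact (hr e he).1
  | some c => rw [mulW, mul_assoc]; exact (hr _ (hJ e he c).1).1

namespace PrincipalSeries

variable (ps : PrincipalSeries S)

lemma isTwoSidedIdeal_C {k : ℕ} (h1 : 1 ≤ k) (h2 : k ≤ ps.m + 1) :
    IsTwoSidedIdeal (ps.C k) := by
  rcases h2.lt_or_eq with h2 | rfl
  · exact isIdealIn_univ_iff.mp (ps.ideal k h1 (by omega))
  · simp [IsTwoSidedIdeal, ps.last]

lemma C_subset_C {k l : ℕ} (h1 : 1 ≤ k) (hkl : k ≤ l) (hl : l ≤ ps.m + 1) :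
    ps.C l ⊆ ps.C k := by
  induction l, hkl using Nat.le_induction with
  | base => exact subset_rfl
  | succ l hkl ih => exact ((ps.ssub l (by omega) (by omega)).subset).trans (ih (by omega))

lemma lt_of_mem_of_notMem {a : S} {k l : ℕ} (ha : a ∈ ps.C k) (hl : a ∉ ps.C l) (h1 : 1 ≤ l)
    (hk : k ≤ ps.m + 1) : k < l :=
  lt_of_not_ge fun hlk => hl (ps.C_subset_C h1 hlk hk ha)

lemma exists_mem_layer (a : S) : ∃ i, 1 ≤ i ∧ i ≤ ps.m ∧ a ∈ ps.C i \ ps.C (i + 1) := by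
  classical
  have ha1 : a ∈ ps.C 1 := ps.first ▸ Set.mem_univ a
  have hm : 1 ≤ ps.m := Nat.one_le_iff_ne_zero.mpr fun h =>
    (by simpa [h, ps.first] using ps.last : IsEmpty S).false a
  set q := Nat.findGreatest (a ∈ ps.C ·) ps.m
  refine ⟨q, Nat.le_findGreatest hm ha1, Nat.findGreatest_le _,
    Nat.findGreatest_spec (P := (a ∈ ps.C ·)) hm ha1, fun haq => ?_⟩
  rcases (Nat.findGreatest_le ps.m : q ≤ ps.m).lt_or_eq with hq | (hq : q = ps.m)
  · exact Nat.findGreatest_is_greatest (Nat.lt_succ_self q) hq haq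
  · rw [hq, ps.last] at haq
    exact haq

lemma mem_FsetQ_iff {j : ℕ} {s : S} :
    s ∈ FsetQ ps j ↔ s ∉ ps.C j ∧ s ∉ annihilator (ps.C (j + 1)) (ps.C j) := by
  simp only [FsetQ, annihilator, Set.mem_ofPred_eq, not_forall, not_and_or, exists_prop]

/-- The elements of `S_i` annihilating `S_q / S_{q+1}`, together with `S_{i+1}`, form an ideal
between `S_{i+1}` and `S_i`, so by maximality one element of the layer escapes the
annihilator only if all do. -/
lemma layer_subset_FsetQ {i q : ℕ} (hi : 1 ≤ i) (hiq : i < q) (hq : q ≤ ps.m) {u : S}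
    (hu : u ∈ ps.C i \ ps.C (i + 1)) (huF : u ∈ FsetQ ps q) :
    ps.C i \ ps.C (i + 1) ⊆ FsetQ ps q := by
  intro v hv
  rw [mem_FsetQ_iff] at huF ⊢
  refine ⟨fun hvq => hv.2 (ps.C_subset_C (by omega) hiq (by omega) hvq), fun hvT => ?_⟩
  have hT := (ps.isTwoSidedIdeal_C (k := q + 1) (by omega) (by omega)).annihilator
    (ps.isTwoSidedIdeal_C (k := q) (by omega) (by omega))
  have hI₀ := isIdealIn_univ_iff.mpr ((hT.inter (ps.isTwoSidedIdeal_C hi (by omega))).union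
    (ps.isTwoSidedIdeal_C (k := i + 1) (by omega) (by omega)))
  rcases ps.maximal i hi (by omega) _ hI₀ Set.subset_union_right
      (Set.union_subset Set.inter_subset_right (ps.ssub i hi (by omega)).subset) with h | h
  · exact hv.2 (h ▸ Or.inl ⟨hvT, hv.1⟩)
  · obtain ⟨huT, -⟩ | hu' := h.symm ▸ hu.1
    exacts [huF.2 huT, hu.2 hu']

lemma mem_FsetQ_of_layer_subset {j q : ℕ} (hj : 1 ≤ j) (hjq : j < q) (hq : q ≤ ps.m) {s : S}
    (hs : s ∈ FsetQ ps j) (hsq : s ∉ ps.C q) (hF : ps.C j \ ps.C (j + 1) ⊆ FsetQ ps q) :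
    s ∈ FsetQ ps q := by
  have hT := (ps.isTwoSidedIdeal_C (k := q + 1) (by omega) (by omega)).annihilator
    (ps.isTwoSidedIdeal_C (k := q) (by omega) (by omega))
  have hCj := ps.isTwoSidedIdeal_C hj (by omega)
  refine (ps.mem_FsetQ_iff).mpr ⟨hsq, fun hsT => ?_⟩
  obtain ⟨-, e, he, hse | hes⟩ := hs
  · exact ((ps.mem_FsetQ_iff).mp (hF ⟨(hCj e he s).1, hse⟩)).2 (hT s hsT e).2
  · exact ((ps.mem_FsetQ_iff).mp (hF ⟨(hCj e he s).2, hes⟩)).2 (hT s hsT e).1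

lemma exists_not_setMNMod_of_nEdge [Finite S] (hPN : IsPN S) {j : ℕ} (hj : 1 ≤ j)
    (hjm : j ≤ ps.m) {a b : S} (ha : a ∈ ps.C j \ ps.C (j + 1)) (hb : b ∈ ps.C (j + 1))
    (hab : NEdge a b) :
    ∃ q, j < q ∧ q ≤ ps.m ∧ ¬ SetMNMod (ps.C (q + 1)) (ps.C q) ∧ a ∈ FsetQ ps q := by
  obtain ⟨x, hx, y, hy, w, hw, p, hc⟩ := exists_isMalcevCycle hab.2
  have hcycle {I : Set S} (hI : IsTwoSidedIdeal I) {g : S}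
      (hg : (Subsemigroup.closure {a, b} : Set S) ⊆ Subsemigroup.closure {g} ∪ I) : x ∈ I :=
    hc.mem_of_subset_closure_singleton_union hI hg hx hy hw
  have hCj1 := ps.isTwoSidedIdeal_C (k := j + 1) (by omega) (by omega)
  have hxj : x ∈ ps.C (j + 1) := hcycle hCj1 (hCj1.closure_pair_subset a hb)
  obtain ⟨q, hq, hqm, hxq, hxq1⟩ := ps.exists_mem_layer x
  have hjq : j < q := by have := ps.lt_of_mem_of_notMem hxj hxq1 (by omega) (by omega); omega
  have hCq := ps.isTwoSidedIdeal_C hq (by omega)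
  have hCq1 := ps.isTwoSidedIdeal_C (k := q + 1) (by omega) (by omega)
  have hyq : y ∈ ps.C q := (hc.mem_iff hCq).mp hxq
  refine ⟨q, hjq, hqm, hPN.not_setMNMod_of_isMalcevCycle hc hCq1 hxq1
    (hCq.closure_subset (Set.pair_subset hxq hyq)), (ps.mem_FsetQ_iff).mpr ⟨?_, fun haT => ?_⟩⟩
  · exact fun haq => ha.2 (ps.C_subset_C (by omega) hjq (by omega) haq)
  have hxT : x ∉ annihilator (ps.C (q + 1)) (ps.C q) := fun hxT =>
    hxq1 (hc.mem_of_malcev_mem hCq1 (k := 1) hc.pos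
      (Or.inl (mulW_mem_of_mem_annihilator hCq hxT hyq (w 0)))).1
  have hT := hCq1.annihilator hCq
  exact hxT (hcycle hT (Set.pair_comm a b ▸ hT.closure_pair_subset b haT))

lemma exists_root_of_layer_subset_FsetQ [Finite S] (hPN : IsPN S) {i : ℕ} (hi : 1 ≤ i) {j : ℕ}
    (hij : i < j) (hjm : j ≤ ps.m) (hF : ps.C i \ ps.C (i + 1) ⊆ FsetQ ps j)
    (hN : ¬ SetMNMod (ps.C (j + 1)) (ps.C j)) :
    ∃ j', i < j' ∧ j' ≤ ps.m ∧ Root ps j' ∧ ps.C i \ ps.C (i + 1) ⊆ FsetQ ps j' := by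
  induction hd : ps.m - j using Nat.strong_induction_on generalizing j with
  | _ d ih =>
    by_cases hroot : Root ps j
    · exact ⟨j, hij, hjm, hroot, hF⟩
    obtain ⟨a, ha, b, hb, hab⟩ : ∃ a ∈ ps.C j \ ps.C (j + 1), ∃ b ∈ ps.C (j + 1), NEdge a b := by
      simpa [Root, hN, and_assoc] using hroot
    obtain ⟨q, hjq, hqm, hNq, haF⟩ := ps.exists_not_setMNMod_of_nEdge hPN (by omega) hjm ha hb hab
    have hFq : ps.C j \ ps.C (j + 1) ⊆ FsetQ ps q := ps.layer_subset_FsetQ (by omega) hjq hqm ha haF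
    refine ih (ps.m - q) (by omega) (by omega) hqm (fun s hs => ?_) hNq rfl
    exact ps.mem_FsetQ_of_layer_subset (by omega) hjq hqm (hF hs)
      (fun hsq => hs.2 (ps.C_subset_C (by omega) (by omega) (by omega) hsq)) hFq

lemma exists_root_of_not_isolated [Finite S] (hPN : IsPN S) {i : ℕ} (hi : 1 ≤ i)
    (him : i ≤ ps.m) (hNI : ¬ Isolated ps i) (hNR : ¬ Root ps i) :
    ∃ j, i < j ∧ j ≤ ps.m ∧ Root ps j ∧ ps.C i \ ps.C (i + 1) ⊆ Stem ps j := by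
  obtain ⟨j, hj, hjm, hF, hN⟩ : ∃ j, 1 ≤ j ∧ j ≤ ps.m ∧ ps.C i \ ps.C (i + 1) ⊆ FsetQ ps j ∧
      ¬ SetMNMod (ps.C (j + 1)) (ps.C j) := by
    by_contra! h
    exact hNI ⟨hNR, h⟩
  obtain ⟨u, hu⟩ := Set.nonempty_of_ssubset (ps.ssub i hi him)
  have hij := ps.lt_of_mem_of_notMem hu.1 (hF hu).1 hj (by omega)
  obtain ⟨j', hij', hj'm, hroot, hF'⟩ := ps.exists_root_of_layer_subset_FsetQ hPN hi hij hjm hF hN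
  exact ⟨j', hij', hj'm, hroot, hF'.trans Set.subset_union_left⟩

lemma notMem_Kset_of_mem_Stem {j : ℕ} (hj : 1 ≤ j) (hjm : j ≤ ps.m) (hroot : Root ps j) {a : S}
    (ha : a ∈ Stem ps j) : a ∉ Kset ps := by
  rintro ⟨i, hi, him, hiso, hai⟩
  rcases ha with haF | haj
  · have hij := ps.lt_of_mem_of_notMem hai.1 haF.1 hj (by omega)
    exact hroot.1 (hiso.2 j hj hjm (ps.layer_subset_FsetQ hi hij hjm hai haF))
  · have hij := ps.lt_of_mem_of_notMem hai.1 haj.2 (by omega) (by omega)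
    have hji := ps.lt_of_mem_of_notMem haj.1 hai.2 (by omega) (by omega)
    obtain rfl : i = j := by omega
    exact hiso.1 hroot

end PrincipalSeries

theorem stmt14_general {S : Type*} [Semigroup S] [Finite S]
    (hPN : IsPN S) (ps : PrincipalSeries S) :
    (∀ i, 1 ≤ i → i ≤ ps.m → ¬ Isolated ps i → ¬ Root ps i →
      ∃ j, i < j ∧ j ≤ ps.m ∧ Root ps j ∧
        ps.C i \ ps.C (i + 1) ⊆ Stem ps j) ∧
    Set.univ \ Kset ps =
      {a : S | ∃ j, 1 ≤ j ∧ j ≤ ps.m ∧ Root ps j ∧ a ∈ Stem ps j} := by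
  refine ⟨fun i hi him => ps.exists_root_of_not_isolated hPN hi him, Set.ext fun a => ⟨?_, ?_⟩⟩
  · rintro ⟨-, haK⟩
    obtain ⟨i, hi, him, hai⟩ := ps.exists_mem_layer a
    have hNI : ¬ Isolated ps i := fun hiso => haK ⟨i, hi, him, hiso, hai⟩
    by_cases hroot : Root ps i
    · exact ⟨i, hi, him, hroot, Or.inr hai⟩
    · obtain ⟨j, hij, hjm, hroot', hsub⟩ := ps.exists_root_of_not_isolated hPN hi him hNI hroot
      exact ⟨j, by omega, hjm, hroot', hsub hai⟩
  · rintro ⟨j, hj, hjm, hroot, ha⟩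
    exact ⟨Set.mem_univ a, ps.notMem_Kset_of_mem_Stem hj hjm hroot ha⟩

/-- If `S_i \ S_{i+1}` is neither an isolated subset nor a root, then it lies in
the stem of some root `S_j \ S_{j+1}` with `i < j`; moreover `S \ K` is the union
of the stems of all the roots. -/
theorem stmt14 {S : Type*} [Semigroup S] [Finite S] [Nonempty S]
    (hPN : IsPN S) (ps : PrincipalSeries S) :
    (∀ i, 1 ≤ i → i ≤ ps.m → ¬ Isolated ps i → ¬ Root ps i →
      ∃ j, i < j ∧ j ≤ ps.m ∧ Root ps j ∧
        ps.C i \ ps.C (i + 1) ⊆ Stem ps j) ∧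
    Set.univ \ Kset ps =
      {a : S | ∃ j, 1 ≤ j ∧ j ≤ ps.m ∧ Root ps j ∧ a ∈ Stem ps j} :=
  stmt14_general hPN ps
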